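/- arXiv:1312.5688 — 3 statements merged into one kernel-verified Lean document; each statement's English description precedes it below -/
import Mathlib

section
/- If A, P, Q are polynomials in ℂ[x,y] with P, Q irreducible of degrees p and q respectively with q ≥ p ≥ 1, if the projective curves {P=0} and {Q=0} intersect in exactly p·q distinct points all lying in the affine plane ℂ², and if A has degree ≤ p−1 and vanishes at all these p·q points, then A is identically zero. -/
open MvPolynomial


open MvPolynomial Finset

variable {σ : Type*} {R : Type*} [CommRing R] [IsDomain R]

lemma hc_top_ne_zero {φ : MvPolynomial σ R} (h : φ ≠ 0) :
    homogeneousComponent φ.totalDegree φ ≠ 0 := by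
  obtain ⟨d, hd, hdeg⟩ := Finset.exists_mem_eq_sup φ.support
    (support_nonempty.mpr h) (fun s => s.sum fun _ e => e)
  have hcoeff : coeff d (homogeneousComponent φ.totalDegree φ) = coeff d φ := by
    rw [coeff_homogeneousComponent]
    have : d.degree = φ.totalDegree := by
      rw [totalDegree, hdeg]; rfl
    simp [this]
  intro hzero
  apply mem_support_iff.mp hd
  rw [← hcoeff, hzero, coeff_zero]

lemma totalDegree_mul_eq {f g : MvPolynomial σ R} (hf : f ≠ 0) (hg : g ≠ 0) :
    (f * g).totalDegree = f.totalDegree + g.totalDegree := by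
  refine le_antisymm (totalDegree_mul f g) ?_
  set a := f.totalDegree
  set b := g.totalDegree
  have key : homogeneousComponent (a + b) (f * g) =
      homogeneousComponent a f * homogeneousComponent b g := by
    conv_lhs => rw [← sum_homogeneousComponent f, ← sum_homogeneousComponent g,
      Finset.sum_mul_sum, map_sum]
    rw [Finset.sum_eq_single a]
    · rw [map_sum, Finset.sum_eq_single b]
      · have : ((homogeneousComponent a f) * (homogeneousComponent b g)).IsHomogeneous (a + b) :=
          (homogeneousComponent_isHomogeneous a f).mul (homogeneousComponent_isHomogeneous b g)
        rw [homogeneousComponent_of_mem ((mem_homogeneousSubmodule _ _).mpr this), if_pos rfl]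
      · intro j hj hjb
        have : ((homogeneousComponent a f) * (homogeneousComponent j g)).IsHomogeneous (a + j) :=
          (homogeneousComponent_isHomogeneous a f).mul (homogeneousComponent_isHomogeneous j g)
        rw [homogeneousComponent_of_mem ((mem_homogeneousSubmodule _ _).mpr this), if_neg (by omega)]
      · intro hb; exact absurd (Finset.self_mem_range_succ b) hb
    · intro i hi hia
      rw [map_sum, Finset.sum_eq_zero]
      intro j hj
      have : ((homogeneousComponent i f) * (homogeneousComponent j g)).IsHomogeneous (i + j) :=
        (homogeneousComponent_isHomogeneous i f).mul (homogeneousComponent_isHomogeneous j g)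
      have hij : i + j ≠ a + b := by
        have := Finset.mem_range.mp hi
        have := Finset.mem_range.mp hj
        omega
      rw [homogeneousComponent_of_mem ((mem_homogeneousSubmodule _ _).mpr this), if_neg (Ne.symm hij)]
    · intro ha; exact absurd (Finset.self_mem_range_succ a) ha
  have hne : homogeneousComponent (a + b) (f * g) ≠ 0 := by
    rw [key]
    exact mul_ne_zero (hc_top_ne_zero hf) (hc_top_ne_zero hg)
  by_contra hlt
  exact hne (homogeneousComponent_eq_zero _ _ (by omega))


noncomputable section

def fs2 (x y : ℕ) : Fin 2 →₀ ℕ := Finsupp.single 0 x + Finsupp.single 1 y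

def expSet (m : ℕ) : Finset (Fin 2 →₀ ℕ) :=
  ((range (m+1)) ×ˢ (range (m+1))).filter (fun x => x.1 + x.2 ≤ m) |>.image
    (fun x => fs2 x.1 x.2)

lemma finsupp_eval0 (x y : ℕ) : fs2 x y 0 = x := by
  simp [fs2, Finsupp.add_apply, Finsupp.single_apply]

lemma finsupp_eval1 (x y : ℕ) : fs2 x y 1 = y := by
  simp [fs2, Finsupp.add_apply, Finsupp.single_apply]

lemma finsupp_fin2_eq (n : Fin 2 →₀ ℕ) : n = fs2 (n 0) (n 1) := by
  ext i
  fin_cases i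
  · simp [finsupp_eval0]
  · simp [finsupp_eval1]

lemma finsupp_fin2_sum (n : Fin 2 →₀ ℕ) : (n.sum fun _ e => e) = n 0 + n 1 := by
  rw [Finsupp.sum_fintype _ _ (fun _ => rfl), Fin.sum_univ_two]

lemma mem_expSet (m : ℕ) (n : Fin 2 →₀ ℕ) :
    n ∈ expSet m ↔ (n.sum fun _ e => e) ≤ m := by
  constructor
  · rintro hn
    simp only [expSet, mem_image, mem_filter, mem_product, mem_range] at hn
    obtain ⟨⟨x, y⟩, ⟨⟨hx, hy⟩, hxy⟩, rfl⟩ := hn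
    rw [finsupp_fin2_sum, finsupp_eval0, finsupp_eval1]
    exact hxy
  · intro hn
    simp only [expSet, mem_image, mem_filter, mem_product, mem_range]
    rw [finsupp_fin2_sum] at hn
    exact ⟨(n 0, n 1), ⟨⟨by omega, by omega⟩, hn⟩, (finsupp_fin2_eq n).symm⟩

lemma expSet_card (m : ℕ) : 2 * (expSet m).card = (m+1)*(m+2) := by
  have hinj : Set.InjOn (fun x : ℕ × ℕ => fs2 x.1 x.2)
      ↑(((range (m+1)) ×ˢ (range (m+1))).filter (fun x => x.1 + x.2 ≤ m)) := by
    rintro ⟨x1, y1⟩ _ ⟨x2, y2⟩ _ h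
    have h0 := congrArg (fun f : Fin 2 →₀ ℕ => f 0) h
    have h1 := congrArg (fun f : Fin 2 →₀ ℕ => f 1) h
    simp only [finsupp_eval0, finsupp_eval1] at h0 h1
    simp [h0, h1]
  rw [expSet, Finset.card_image_of_injOn hinj]
  have hdecomp : ((range (m+1)) ×ˢ (range (m+1))).filter (fun x => x.1 + x.2 ≤ m) =
      (range (m+1)).biUnion (fun i => (range (m+1-i)).image (Prod.mk i)) := by
    ext ⟨x, y⟩
    simp only [mem_filter, mem_product, mem_range, mem_biUnion, mem_image, Prod.mk.injEq]
    constructor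
    · rintro ⟨⟨hx, hy⟩, hxy⟩; exact ⟨x, by omega, y, by omega, rfl, rfl⟩
    · rintro ⟨i, hi, j, hj, rfl, rfl⟩; omega
  rw [hdecomp, Finset.card_biUnion]
  · have hcards : ∀ i ∈ range (m+1), ((range (m+1-i)).image (Prod.mk i)).card = m+1-i := by
      intro i _
      rw [Finset.card_image_of_injective _ (fun a b h => (Prod.ext_iff.mp h).2),
        Finset.card_range]
    rw [Finset.sum_congr rfl hcards]
    have hrefl : ∑ i ∈ range (m+1), (m+1-i) = ∑ i ∈ range (m+1), (i+1) := by
      rw [← Finset.sum_range_reflect]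
      apply Finset.sum_congr rfl
      intro i hi
      have := Finset.mem_range.mp hi
      omega
    rw [hrefl, Finset.sum_add_distrib, Finset.sum_const, Finset.card_range, smul_eq_mul, mul_one]
    have h2 : (∑ i ∈ range (m+1), i) * 2 = (m+1)*m := by
      simpa using Finset.sum_range_id_mul_two (m+1)
    nlinarith [h2]
  · intro i _ j _ hij
    simp only [Finset.disjoint_left, mem_image]
    rintro ⟨x, y⟩ ⟨a, _, h1⟩ ⟨b, _, h2⟩
    exact hij ((Prod.ext_iff.mp h1).1.trans (Prod.ext_iff.mp h2).1.symm)

/-- dimension of the space of polynomials of degree ≤ m in 2 variables -/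
def D (m : ℕ) : ℕ := Module.finrank ℂ (restrictTotalDegree (Fin 2) ℂ m)

lemma twoD (m : ℕ) : 2 * D m = (m+1)*(m+2) := by
  have hset : {n : Fin 2 →₀ ℕ | (n.sum fun _ e => e) ≤ m} = ↑(expSet m) := by
    ext n; simp [mem_expSet]
  haveI : Fintype ({n : Fin 2 →₀ ℕ | (n.sum fun _ e => e) ≤ m}) := by
    rw [hset]; exact FinsetCoe.fintype _
  rw [D, restrictTotalDegree,
    Module.finrank_eq_card_basis (basisRestrictSupport ℂ _)]
  rw [← expSet_card m]
  congr 1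
  rw [← Set.toFinset_card]
  congr 1
  ext n
  simp [mem_expSet]


abbrev V (n : ℕ) : Submodule ℂ (MvPolynomial (Fin 2) ℂ) := restrictTotalDegree (Fin 2) ℂ n

/-- evaluation linear map -/
def evMap (S : Finset (Fin 2 → ℂ)) (d : ℕ) : V d →ₗ[ℂ] (↥S → ℂ) where
  toFun g z := eval z.1 g.1
  map_add' g h := by funext z; simp
  map_smul' c g := by funext z; simp [smul_eval]

/-- a linear polynomial vanishing at w but equal to 1 at z -/
def lin (z w : Fin 2 → ℂ) : MvPolynomial (Fin 2) ℂ :=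
  if h : ∃ i, z i ≠ w i then C (z h.choose - w h.choose)⁻¹ * (X h.choose - C (w h.choose)) else 1

lemma lin_deg (z w : Fin 2 → ℂ) : (lin z w).totalDegree ≤ 1 := by
  rw [lin]
  split_ifs with h
  · refine (totalDegree_mul _ _).trans ?_
    rw [totalDegree_C]
    have : (X h.choose - C (w h.choose) : MvPolynomial (Fin 2) ℂ).totalDegree ≤ 1 := by
      rw [sub_eq_add_neg]
      refine (totalDegree_add _ _).trans ?_
      simp [totalDegree_X, totalDegree_neg]
    omega
  · simp [totalDegree_one]

lemma lin_self {z w : Fin 2 → ℂ} (h : z ≠ w) : eval z (lin z w) = 1 := by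
  have hex : ∃ i, z i ≠ w i := Function.ne_iff.mp h
  rw [lin, dif_pos hex]
  have hne : z hex.choose - w hex.choose ≠ 0 := sub_ne_zero.mpr hex.choose_spec
  simp [inv_mul_cancel₀ hne]

lemma lin_other {z w : Fin 2 → ℂ} (h : z ≠ w) : eval w (lin z w) = 0 := by
  have hex : ∃ i, z i ≠ w i := Function.ne_iff.mp h
  rw [lin, dif_pos hex]
  simp

def interp (S : Finset (Fin 2 → ℂ)) (z : Fin 2 → ℂ) : MvPolynomial (Fin 2) ℂ :=
  ∏ w ∈ S.erase z, lin z w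

lemma interp_deg (S : Finset (Fin 2 → ℂ)) (z : Fin 2 → ℂ) :
    (interp S z).totalDegree ≤ S.card := by
  refine (totalDegree_finset_prod _ _).trans ?_
  calc ∑ w ∈ S.erase z, (lin z w).totalDegree ≤ ∑ _w ∈ S.erase z, 1 :=
        Finset.sum_le_sum (fun w _ => lin_deg z w)
    _ = (S.erase z).card := by simp
    _ ≤ S.card := Finset.card_le_card (Finset.erase_subset _ _)

lemma interp_self (S : Finset (Fin 2 → ℂ)) (z : Fin 2 → ℂ) : eval z (interp S z) = 1 := by
  rw [interp, map_prod]
  exact Finset.prod_eq_one (fun w hw => lin_self (Ne.symm (Finset.ne_of_mem_erase hw)))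

lemma interp_other {S : Finset (Fin 2 → ℂ)} {z w : Fin 2 → ℂ} (hw : w ∈ S) (hne : w ≠ z) :
    eval w (interp S z) = 0 := by
  rw [interp, map_prod]
  exact Finset.prod_eq_zero (Finset.mem_erase.mpr ⟨hne, hw⟩) (lin_other (Ne.symm hne))

lemma ev_surjective (S : Finset (Fin 2 → ℂ)) (d : ℕ) (hd : S.card ≤ d) :
    Function.Surjective (evMap S d) := by
  intro f
  have hmem : ∀ z : ↥S, interp S z.1 ∈ V d :=
    fun z => (mem_restrictTotalDegree _ _ _).mpr ((interp_deg S z.1).trans hd)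
  refine ⟨∑ z ∈ S.attach, f z • ⟨interp S z.1, hmem z⟩, ?_⟩
  funext w
  have : (evMap S d) (∑ z ∈ S.attach, f z • (⟨interp S z.1, hmem z⟩ : V d)) w
      = ∑ z ∈ S.attach, f z * eval w.1 (interp S z.1) := by
    rw [map_sum]
    simp [evMap, smul_eval]
  rw [this, Finset.sum_eq_single w]
  · rw [interp_self, mul_one]
  · intro z _ hzw
    rw [interp_other w.2 (fun h => hzw (Subtype.ext h).symm), mul_zero]
  · intro hw; exact absurd (Finset.mem_attach S w) hw


/-- the map (u,v) ↦ uA + vQ -/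
def Phi (A Q : MvPolynomial (Fin 2) ℂ) {m n d : ℕ}
    (hA : A.totalDegree + m ≤ d) (hQ : Q.totalDegree + n ≤ d) :
    (V m × V n) →ₗ[ℂ] V d where
  toFun x := ⟨x.1.1 * A + x.2.1 * Q, by
    refine Submodule.add_mem _ ?_ ?_ <;> rw [mem_restrictTotalDegree]
    · exact (totalDegree_mul _ _).trans
        (by have := (mem_restrictTotalDegree _ _ _).mp x.1.2; omega)
    · exact (totalDegree_mul _ _).trans
        (by have := (mem_restrictTotalDegree _ _ _).mp x.2.2; omega)⟩
  map_add' x y := by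
    apply Subtype.ext
    simp only [Submodule.coe_add, Prod.fst_add, Prod.snd_add]
    ring
  map_smul' c x := by
    apply Subtype.ext
    simp only [Prod.smul_fst, Prod.smul_snd, SetLike.val_smul, smul_eq_C_mul, RingHom.id_apply]
    ring

/-- the map w ↦ (wQ, -(wA)) -/
def iota (A Q : MvPolynomial (Fin 2) ℂ) {e m n : ℕ}
    (hQ : e + Q.totalDegree ≤ m) (hA : e + A.totalDegree ≤ n) :
    V e →ₗ[ℂ] (V m × V n) where
  toFun w := (⟨w.1 * Q, by
      rw [mem_restrictTotalDegree]
      exact (totalDegree_mul _ _).trans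
        (by have := (mem_restrictTotalDegree _ _ _).mp w.2; omega)⟩,
    ⟨-(w.1 * A), by
      rw [mem_restrictTotalDegree]
      rw [totalDegree_neg]
      exact (totalDegree_mul _ _).trans
        (by have := (mem_restrictTotalDegree _ _ _).mp w.2; omega)⟩)
  map_add' x y := by
    refine Prod.ext (Subtype.ext ?_) (Subtype.ext ?_) <;>
      simp only [Submodule.coe_add, Prod.fst_add, Prod.snd_add] <;> ring
  map_smul' c x := by
    refine Prod.ext (Subtype.ext ?_) (Subtype.ext ?_) <;>
      simp only [Prod.smul_fst, Prod.smul_snd, SetLike.val_smul, smul_eq_C_mul,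
        RingHom.id_apply] <;> ring


/-- If `A, P, Q ∈ ℂ[x,y]` with `P, Q` irreducible of degrees `p, q`, `q ≥ p ≥ 1`,
the curves `{P=0}` and `{Q=0}` meet in exactly `p·q` distinct points, all affine,
and `A` of degree `≤ p−1` vanishes at all of them, then `A = 0`. -/
theorem statement0 (p q : ℕ) (hp : 1 ≤ p) (hpq : p ≤ q)
    (A P Q : MvPolynomial (Fin 2) ℂ)
    (hPirr : Irreducible P) (hQirr : Irreducible Q)
    (hPdeg : P.totalDegree = p) (hQdeg : Q.totalDegree = q)
    (Z : Set (Fin 2 → ℂ))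
    (hZ : Z = {v | eval v P = 0 ∧ eval v Q = 0})
    (hZfin : Z.Finite) (hZcard : Z.ncard = p * q)
    (hAdeg : A.totalDegree ≤ p - 1)
    (hAvan : ∀ v ∈ Z, eval v A = 0) :
    A = 0 := by
  by_contra hA0
  have hQ0 : Q ≠ 0 := hQirr.ne_zero
  have hQprime : Prime Q := UniqueFactorizationMonoid.irreducible_iff_prime.mp hQirr
  have hQndvdA : ¬ Q ∣ A := by
    rintro ⟨c, rfl⟩
    rcases eq_or_ne c 0 with rfl | hc
    · exact hA0 (mul_zero Q)
    · have hmul := totalDegree_mul_eq hQ0 hc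
      rw [hQdeg] at hmul
      omega
  set a := A.totalDegree with ha
  set S : Finset (Fin 2 → ℂ) := hZfin.toFinset with hS
  set N := p * q with hN
  have hSN : S.card = N := by
    rw [hS, ← Set.ncard_eq_toFinset_card _ hZfin, hZcard]
  set e := N with he
  set d := a + q + e with hd
  -- evaluation map is surjective
  have hev : Function.Surjective (evMap S d) := ev_surjective S d (by omega)
  have h1 : N + Module.finrank ℂ (LinearMap.ker (evMap S d)) = D d := by
    have hrn := LinearMap.finrank_range_add_finrank_ker (evMap S d)
    rw [LinearMap.range_eq_top.mpr hev, finrank_top, Module.finrank_pi, Fintype.card_coe,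
      hSN] at hrn
    exact hrn
  -- the multiplication map
  have hAm : A.totalDegree + (q + e) ≤ d := by omega
  have hQn : Q.totalDegree + (a + e) ≤ d := by rw [hQdeg]; omega
  have hrange : LinearMap.range (Phi A Q hAm hQn) ≤ LinearMap.ker (evMap S d) := by
    rintro x ⟨⟨u, v⟩, rfl⟩
    rw [LinearMap.mem_ker]
    funext z
    have hz : z.1 ∈ Z := (Set.Finite.mem_toFinset hZfin).mp z.2
    have hzQ : eval z.1 Q = 0 := by rw [hZ] at hz; exact hz.2
    have hzA := hAvan z.1 hz
    show eval z.1 (u.1 * A + v.1 * Q) = 0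
    rw [eval_add, eval_mul, eval_mul, hzA, hzQ, mul_zero, mul_zero, add_zero]
  have hQm : e + Q.totalDegree ≤ q + e := by rw [hQdeg]; omega
  have hAn : e + A.totalDegree ≤ a + e := by omega
  have hker : LinearMap.ker (Phi A Q hAm hQn) ≤ LinearMap.range (iota A Q hQm hAn) := by
    rintro ⟨u, v⟩ hx
    rw [LinearMap.mem_ker] at hx
    have hx' : u.1 * A + v.1 * Q = 0 := Subtype.ext_iff.mp hx
    rcases eq_or_ne u.1 0 with hu | hu
    · have hv : v.1 * Q = 0 := by rwa [hu, zero_mul, zero_add] at hx'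
      have hv0 : v.1 = 0 := by
        rcases mul_eq_zero.mp hv with h | h
        · exact h
        · exact absurd h hQ0
      refine ⟨0, ?_⟩
      refine Prod.ext (Subtype.ext ?_) (Subtype.ext ?_)
      · show (0 : MvPolynomial (Fin 2) ℂ) * Q = u.1
        rw [zero_mul, hu]
      · show -((0 : MvPolynomial (Fin 2) ℂ) * A) = v.1
        rw [zero_mul, neg_zero, hv0]
    · have hdvd : Q ∣ u.1 * A := ⟨-v.1, by linear_combination hx'⟩
      have hQu : Q ∣ u.1 := (hQprime.2.2 _ _ hdvd).resolve_right hQndvdA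
      obtain ⟨w, hw⟩ := hQu
      have hw0 : w ≠ 0 := by rintro rfl; rw [mul_zero] at hw; exact hu hw
      have hdegw : w.totalDegree ≤ e := by
        have hmul := totalDegree_mul_eq hQ0 hw0
        have hu2 : u.1.totalDegree ≤ q + e := (mem_restrictTotalDegree _ _ _).mp u.2
        rw [hw, hmul, hQdeg] at hu2
        omega
      have hveq : v.1 = -(w * A) := by
        have hzero : Q * (w * A + v.1) = 0 := by rw [hw] at hx'; linear_combination hx'
        rcases mul_eq_zero.mp hzero with h | h
        · exact absurd h hQ0
        · linear_combination h
      refine ⟨⟨w, (mem_restrictTotalDegree _ _ _).mpr hdegw⟩, ?_⟩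
      refine Prod.ext (Subtype.ext ?_) (Subtype.ext ?_)
      · show w * Q = u.1
        rw [hw]; ring
      · show -(w * A) = v.1
        rw [hveq]
  -- dimension chase
  have h2 : Module.finrank ℂ (LinearMap.range (Phi A Q hAm hQn)) ≤
      Module.finrank ℂ (LinearMap.ker (evMap S d)) := Submodule.finrank_mono hrange
  have h3 : Module.finrank ℂ (LinearMap.range (Phi A Q hAm hQn)) +
      Module.finrank ℂ (LinearMap.ker (Phi A Q hAm hQn)) = D (q+e) + D (a+e) := by
    have hrn := LinearMap.finrank_range_add_finrank_ker (Phi A Q hAm hQn)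
    rw [Module.finrank_prod] at hrn
    exact hrn
  have h4 : Module.finrank ℂ (LinearMap.ker (Phi A Q hAm hQn)) ≤ D e :=
    (Submodule.finrank_mono hker).trans (LinearMap.finrank_range_le _)
  have hmain : D (q+e) + D (a+e) + N ≤ D d + D e := by omega
  -- arithmetic
  have t1 := twoD (q+e)
  have t2 := twoD (a+e)
  have t3 := twoD d
  have t4 := twoD e
  have hexp : (a+q+e+1)*(a+q+e+2) + (e+1)*(e+2) =
      (q+e+1)*(q+e+2) + (a+e+1)*(a+e+2) + 2*(a*q) := by ring
  have haq : N ≤ a * q := by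
    have h2main : 2 * (D (q+e) + D (a+e) + N) ≤ 2 * (D d + D e) :=
      Nat.mul_le_mul_left 2 hmain
    rw [hd] at t3
    linarith [h2main, t1, t2, t3, t4, hexp]
  have hale : a ≤ p - 1 := hAdeg
  have : a * q ≤ (p-1) * q := Nat.mul_le_mul_right q hale
  have hpq1 : (p-1)*q + q = p*q := by
    have hp1 : p - 1 + 1 = p := by omega
    calc (p-1)*q + q = ((p-1)+1)*q := by ring
      _ = p*q := by rw [hp1]
  omega
end
end

section
/- Let R, S ∈ ℂ[x,y] be polynomials of degrees d and e with d ≤ e, with R irreducible, R_x not identically zero on {R=0}, and suppose the set {R=0} ∩ {S_x=0} consists of d(e−1) distinct points in ℂ² at none of which S vanishes. If polynomials A_{p,q} ∈ ℂ[x,y] of degrees ≤ d−1 (indexed by p,q ≥ 0 with p+q ≤ m) satisfy the identity 0 ≡ Σ_{p+q≤m} A_{p,q}·(R_x)^p·(S_x)^q·R^{m−p}·S^{m−q} in ℂ[x,y], then all A_{p,q} are identically zero. -/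
open MvPolynomial Finset

lemma exists_zero_avoiding (R : MvPolynomial (Fin 2) ℂ)
    (hRxne : pderiv 0 R ≠ 0) (W : Set ℂ) (hW : W.Finite) :
    ∃ v : Fin 2 → ℂ, eval v R = 0 ∧ v 1 ∉ W := by
  have hR0 : R ≠ 0 := by rintro rfl; simp at hRxne
  set q := MvPolynomial.finSuccEquiv ℂ 1 R with hq
  have hq0 : q ≠ 0 := by
    simp only [hq, ne_eq, EmbeddingLike.map_eq_zero_iff]
    exact hR0
  have hdeg : 0 < q.natDegree := by
    rw [hq, natDegree_finSuccEquiv]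
    rcases Nat.eq_zero_or_pos (degreeOf 0 R) with h | h
    · exfalso
      apply hRxne
      apply pderiv_eq_zero_of_notMem_vars
      intro hv
      rw [mem_vars] at hv
      obtain ⟨d, hd, hd0⟩ := hv
      have := Finset.le_sup (f := fun m => m 0) hd
      rw [← degreeOf_eq_sup, h] at this
      simp only [Nat.le_zero] at this
      rw [Finsupp.mem_support_iff, this] at hd0
      exact hd0 rfl
    · exact h
  have hlc : q.leadingCoeff ≠ 0 := Polynomial.leadingCoeff_ne_zero.mpr hq0
  -- the leading coefficient, as a one-variable polynomial evaluated
  set ev0 : MvPolynomial (Fin 0) ℂ →+* ℂ := (MvPolynomial.eval Fin.elim0 : MvPolynomial (Fin 0) ℂ →+* ℂ) with hev0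
  have hev0inj : Function.Injective ev0 := by
    intro x y hxy
    obtain ⟨rx, rfl⟩ := C_surjective (Fin 0) x
    obtain ⟨ry, rfl⟩ := C_surjective (Fin 0) y
    simp only [hev0, eval_C] at hxy
    rw [hxy]
  set c : Polynomial ℂ := Polynomial.map ev0 (MvPolynomial.finSuccEquiv ℂ 0 q.leadingCoeff) with hc
  have hcne : c ≠ 0 := by
    simp only [hc, ne_eq]
    rw [Polynomial.map_eq_zero_iff hev0inj]
    simp only [EmbeddingLike.map_eq_zero_iff]
    exact hlc
  have hceval : ∀ a : ℂ, Polynomial.eval a c = eval (fun _ : Fin 1 => a) q.leadingCoeff := by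
    intro a
    have h1 : (fun _ : Fin 1 => a) = Fin.cons a Fin.elim0 := by
      funext i
      rw [Subsingleton.elim i 0]
      simp
    rw [h1, eval_eq_eval_mv_eval']
  -- choose a good value a
  have hbad : (W ∪ {a : ℂ | c.IsRoot a}).Finite := hW.union (Polynomial.finite_setOf_isRoot hcne)
  obtain ⟨a, ha⟩ := (hbad.infinite_compl).nonempty
  simp only [Set.mem_compl_iff, Set.mem_union, not_or] at ha
  obtain ⟨haW, haroot⟩ := ha
  set qa : Polynomial ℂ := Polynomial.map (MvPolynomial.eval (fun _ : Fin 1 => a) : MvPolynomial (Fin 1) ℂ →+* ℂ) q with hqa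
  have hcoeff : qa.coeff q.natDegree ≠ 0 := by
    rw [hqa, Polynomial.coeff_map]
    have := hceval a
    rw [Polynomial.coeff_natDegree] at *
    rw [← this]
    exact haroot
  have hqadeg : 0 < qa.degree := by
    have h1 : q.natDegree ≤ qa.natDegree := Polynomial.le_natDegree_of_ne_zero hcoeff
    have : 0 < qa.natDegree := lt_of_lt_of_le hdeg h1
    exact Polynomial.natDegree_pos_iff_degree_pos.mp this
  obtain ⟨t, ht⟩ := Complex.exists_root hqadeg
  refine ⟨Fin.cons t (fun _ => a), ?_, ?_⟩
  · rw [eval_eq_eval_mv_eval']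
    exact ht
  · simpa using haW

lemma inner_vanish (R S Sx : MvPolynomial (Fin 2) ℂ) (hRprime : Prime R)
    (hndvd : ¬ R ∣ Sx) (Z : Set (Fin 2 → ℂ))
    (hZR : ∀ v ∈ Z, eval v R = 0) (hZSx : ∀ v ∈ Z, eval v Sx = 0)
    (hSne : ∀ v ∈ Z, eval v S ≠ 0) :
    ∀ (n : ℕ) (B : ℕ → MvPolynomial (Fin 2) ℂ),
      (∀ j, j ≤ n → (∀ v ∈ Z, eval v (B j) = 0) → B j = 0) →
      (R ∣ ∑ j ∈ Finset.range (n+1), B j * Sx ^ j * S ^ (n - j)) →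
      ∀ j, j ≤ n → B j = 0 := by
  intro n
  induction n with
  | zero =>
    intro B hvan hdvd j hj
    interval_cases j
    apply hvan 0 le_rfl
    intro v hv
    obtain ⟨t, ht⟩ := hdvd
    simp only [zero_add, range_one, sum_singleton, pow_zero, mul_one, Nat.sub_zero] at ht
    rw [ht]
    simp [hZR v hv]
  | succ n ihn =>
    intro B hvan hdvd j hj
    have hB0 : B 0 = 0 := by
      apply hvan 0 (Nat.zero_le _)
      intro v hv
      have h0 : eval v (∑ j ∈ range (n+2), B j * Sx^j * S^(n+1-j)) = 0 := by
        obtain ⟨t, ht⟩ := hdvd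
        rw [ht]
        simp [hZR v hv]
      rw [map_sum, Finset.sum_eq_single 0] at h0
      · simp only [pow_zero, mul_one, Nat.sub_zero, map_mul, map_pow] at h0
        rcases mul_eq_zero.mp h0 with h | h
        · exact h
        · exact absurd h (pow_ne_zero _ (hSne v hv))
      · intro b _ hbne
        simp [hZSx v hv, zero_pow hbne]
      · intro h
        exact absurd (Finset.mem_range.mpr (Nat.succ_pos _)) h
    have hsum : ∑ j ∈ range (n+2), B j * Sx^j * S^(n+1-j)
        = Sx * ∑ j ∈ range (n+1), B (j+1) * Sx^j * S^(n-j) := by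
      rw [Finset.sum_range_succ' (fun j => B j * Sx^j * S^(n+1-j)) (n+1)]
      rw [hB0, Finset.mul_sum]
      simp only [zero_mul, add_zero]
      apply Finset.sum_congr rfl
      intro i _
      have h1 : n + 1 - (i+1) = n - i := by omega
      rw [h1]
      ring
    have hdvd2 : R ∣ ∑ j ∈ range (n+1), B (j+1) * Sx^j * S^(n-j) := by
      rw [hsum] at hdvd
      exact (hRprime.dvd_or_dvd hdvd).resolve_left hndvd
    have hrec := ihn (fun j => B (j+1)) (fun j hj => hvan (j+1) (by omega)) hdvd2
    match j, hj with
    | 0, _ => exact hB0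
    | (j+1), hj => exact hrec j (by omega)

/-- Injectivity proposition: if polynomials `A p q` of degrees `≤ d−1` satisfy
`0 = Σ_{p+q≤m} A p q · Rx^p · Sx^q · R^{m−p} · S^{m−q}`, under the generic geometric
hypotheses on `R`, `S`, then all `A p q` vanish identically. -/
theorem statement2 (d e m : ℕ) (hde : d ≤ e)
    (R S : MvPolynomial (Fin 2) ℂ)
    (hRdeg : R.totalDegree = d) (hSdeg : S.totalDegree = e)
    (hRirr : Irreducible R) (hSirr : Irreducible S)
    -- `R_x` is not identically zero on `{R = 0}`
    (hRx : ∃ v : Fin 2 → ℂ, eval v R = 0 ∧ eval v (pderiv 0 R) ≠ 0)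
    -- `S` is not identically zero on `{R = 0}`
    (hSonR : ∃ v : Fin 2 → ℂ, eval v R = 0 ∧ eval v S ≠ 0)
    -- the intersection `{R = 0} ∩ {S_x = 0}` consists of `d(e−1)` distinct affine points
    (Z : Set (Fin 2 → ℂ))
    (hZ : Z = {v | eval v R = 0 ∧ eval v (pderiv 0 S) = 0})
    (hZfin : Z.Finite) (hZcard : Z.ncard = d * (e - 1))
    -- at none of which `S` vanishes
    (hSne : ∀ v ∈ Z, eval v S ≠ 0)
    -- Bézout consequence: any polynomial of degree `≤ d−1` vanishing on `Z` vanishes identically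
    (hBezout : ∀ B : MvPolynomial (Fin 2) ℂ, B.totalDegree ≤ d - 1 →
      (∀ v ∈ Z, eval v B = 0) → B = 0)
    (A : ℕ → ℕ → MvPolynomial (Fin 2) ℂ)
    (hAdeg : ∀ p q : ℕ, p + q ≤ m → (A p q).totalDegree ≤ d - 1)
    (hident : (0 : MvPolynomial (Fin 2) ℂ) =
      ∑ p ∈ Finset.range (m + 1), ∑ q ∈ Finset.range (m + 1 - p),
        A p q * (pderiv 0 R) ^ p * (pderiv 0 S) ^ q * R ^ (m - p) * S ^ (m - q)) :
    ∀ p q : ℕ, p + q ≤ m → A p q = 0 := by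
  obtain ⟨v₀, hv₀R, hv₀Rx⟩ := hRx
  obtain ⟨v₁, hv₁R, hv₁S⟩ := hSonR
  have hRprime : Prime R := UniqueFactorizationMonoid.irreducible_iff_prime.mp hRirr
  have hR0 : R ≠ 0 := hRprime.ne_zero
  have hRxne : pderiv 0 R ≠ 0 := by
    intro h
    rw [h] at hv₀Rx
    simp at hv₀Rx
  have hRndvdRx : ¬ R ∣ pderiv 0 R := by
    rintro ⟨t, ht⟩
    apply hv₀Rx
    rw [ht, map_mul, hv₀R, zero_mul]
  have hRndvdS : ¬ R ∣ S := by
    rintro ⟨t, ht⟩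
    apply hv₁S
    rw [ht, map_mul, hv₁R, zero_mul]
  have hRndvdSx : ¬ R ∣ pderiv 0 S := by
    rintro ⟨t, ht⟩
    obtain ⟨v, hvR, hvW⟩ := exists_zero_avoiding R hRxne ((fun v => v 1) '' Z) (hZfin.image _)
    apply hvW
    refine Set.mem_image_of_mem _ ?_
    rw [hZ]
    refine ⟨hvR, ?_⟩
    rw [ht, map_mul, hvR, zero_mul]
  have hZR : ∀ v ∈ Z, eval v R = 0 := by
    intro v hv; rw [hZ] at hv; exact hv.1
  have hZSx : ∀ v ∈ Z, eval v (pderiv 0 S) = 0 := by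
    intro v hv; rw [hZ] at hv; exact hv.2
  have key : ∀ k, k ≤ m → ∀ q, q ≤ k → A (m - k) q = 0 := by
    intro k
    induction k using Nat.strong_induction_on with
    | _ k IH =>
      intro hkm q hqk
      have prior : ∀ p q', p + q' ≤ m → m - k < p → A p q' = 0 := by
        intro p q' hpq hp
        have h1 : m - p < k := by omega
        have := IH (m - p) h1 (by omega) q' (by omega)
        rwa [show m - (m - p) = p by omega] at this
      -- truncate outer sum
      have h1 : (0 : MvPolynomial (Fin 2) ℂ) =
          ∑ p ∈ range (m - k + 1), ∑ q' ∈ range (m + 1 - p),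
            A p q' * (pderiv 0 R) ^ p * (pderiv 0 S) ^ q' * R ^ (m - p) * S ^ (m - q') := by
        rw [hident]
        symm
        apply Finset.sum_subset
        · exact Finset.range_subset_range.mpr (by omega)
        · intro p hp hpn
          rw [Finset.mem_range] at hp
          rw [Finset.mem_range, not_lt] at hpn
          apply Finset.sum_eq_zero
          intro q' hq'
          rw [Finset.mem_range] at hq'
          rw [prior p q' (by omega) (by omega)]
          ring
      -- factor out R^k
      have h2 : ∑ p ∈ range (m - k + 1), ∑ q' ∈ range (m + 1 - p),
            A p q' * (pderiv 0 R) ^ p * (pderiv 0 S) ^ q' * R ^ (m - p) * S ^ (m - q')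
          = R ^ k * ∑ p ∈ range (m - k + 1), ∑ q' ∈ range (m + 1 - p),
            A p q' * (pderiv 0 R) ^ p * (pderiv 0 S) ^ q' * R ^ (m - k - p) * S ^ (m - q') := by
        rw [Finset.mul_sum]
        apply Finset.sum_congr rfl
        intro p hp
        rw [Finset.mem_range] at hp
        rw [Finset.mul_sum]
        apply Finset.sum_congr rfl
        intro q' _
        rw [show m - p = k + (m - k - p) by omega, pow_add]
        ring
      have h3 : ∑ p ∈ range (m - k + 1), ∑ q' ∈ range (m + 1 - p),
            A p q' * (pderiv 0 R) ^ p * (pderiv 0 S) ^ q' * R ^ (m - k - p) * S ^ (m - q') = 0 := by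
        have := h1
        rw [h2] at this
        rcases mul_eq_zero.mp this.symm with h | h
        · exact absurd h (pow_ne_zero _ hR0)
        · exact h
      rw [Finset.sum_range_succ] at h3
      have h5 : R ∣ ∑ p ∈ range (m - k), ∑ q' ∈ range (m + 1 - p),
            A p q' * (pderiv 0 R) ^ p * (pderiv 0 S) ^ q' * R ^ (m - k - p) * S ^ (m - q') := by
        apply Finset.dvd_sum
        intro p hp
        rw [Finset.mem_range] at hp
        apply Finset.dvd_sum
        intro q' _
        have : R ∣ R ^ (m - k - p) := dvd_pow_self R (by omega)
        exact (this.mul_left _).mul_right _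
      have h6 : R ∣ ∑ q' ∈ range (m + 1 - (m - k)),
          A (m - k) q' * (pderiv 0 R) ^ (m - k) * (pderiv 0 S) ^ q' * R ^ (m - k - (m - k)) * S ^ (m - q') := by
        have : ∑ q' ∈ range (m + 1 - (m - k)),
            A (m - k) q' * (pderiv 0 R) ^ (m - k) * (pderiv 0 S) ^ q' * R ^ (m - k - (m - k)) * S ^ (m - q')
            = -∑ p ∈ range (m - k), ∑ q' ∈ range (m + 1 - p),
            A p q' * (pderiv 0 R) ^ p * (pderiv 0 S) ^ q' * R ^ (m - k - p) * S ^ (m - q') := by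
          linear_combination h3
        rw [this]
        exact h5.neg_right
      have h7 : ∑ q' ∈ range (m + 1 - (m - k)),
          A (m - k) q' * (pderiv 0 R) ^ (m - k) * (pderiv 0 S) ^ q' * R ^ (m - k - (m - k)) * S ^ (m - q')
          = (pderiv 0 R) ^ (m - k) * (S ^ (m - k) *
            ∑ q' ∈ range (k + 1), A (m - k) q' * (pderiv 0 S) ^ q' * S ^ (k - q')) := by
        rw [show m + 1 - (m - k) = k + 1 by omega]
        rw [Finset.mul_sum, Finset.mul_sum]
        apply Finset.sum_congr rfl
        intro q' hq'
        rw [Finset.mem_range] at hq'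
        rw [show m - q' = (m - k) + (k - q') by omega, pow_add,
          show m - k - (m - k) = 0 by omega, pow_zero]
        ring
      rw [h7] at h6
      have h8 : R ∣ ∑ q' ∈ range (k + 1), A (m - k) q' * (pderiv 0 S) ^ q' * S ^ (k - q') := by
        rcases hRprime.dvd_or_dvd h6 with h | h
        · exact absurd (hRprime.dvd_of_dvd_pow h) hRndvdRx
        rcases hRprime.dvd_or_dvd h with h | h
        · exact absurd (hRprime.dvd_of_dvd_pow h) hRndvdS
        · exact h
      exact inner_vanish R S (pderiv 0 S) hRprime hRndvdSx Z hZR hZSx hSne k (fun q' => A (m - k) q')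
        (fun j hj => hBezout _ (hAdeg _ _ (by omega))) h8 q hqk
  intro p q hpq
  have := key (m - p) (by omega) q (by omega)
  rwa [show m - (m - p) = p by omega] at this
end

section
/- Let d ≥ 752 be an integer, let e be an integer with d ≤ e ≤ d²/648, and set m := ⌊d/12⌋ and a := d − 4m. Then the number of degrees of freedom N := ((a+1)(a+2)/2)·((m+1)(m+2)(m+3)/6) strictly exceeds the number of constraints C := (m+1)·d·(d + d·m + e·m), and in fact N − C ≥ (1/93312)·d³ − (61/7776)·d² − (17/108)·d − 28/27. -/
lemma statement16_posaux (D : ℚ) (h : (752:ℚ) ≤ D) :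
    (0:ℚ) < (1 / 93312) * D ^ 3 - (61 / 7776) * D ^ 2 - (17 / 108) * D - 28 / 27 := by
  have h1 : 0 ≤ D - 752 := by linarith
  have f1 : 0 ≤ D ^ 2 * (D - 752) := mul_nonneg (sq_nonneg D) h1
  have f2 : 0 ≤ D * (D - 752) := mul_nonneg (by linarith) h1
  linarith

set_option maxHeartbeats 1000000 in

/-- Counting: for integers `d ≥ 752`, `d ≤ e ≤ d²/648`, with `m := ⌊d/12⌋` and `a := d − 4m`,
the number of degrees of freedom `N = ((a+1)(a+2)/2)·((m+1)(m+2)(m+3)/6)` strictly exceeds the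
number of constraints `C = (m+1)·d·(d + dm + em)`, and
`N − C ≥ (1/93312)d³ − (61/7776)d² − (17/108)d − 28/27`. -/
theorem statement16 (d e : ℕ) (hd : 752 ≤ d) (hde : d ≤ e)
    (he : (e : ℚ) ≤ (d : ℚ) ^ 2 / 648)
    (m a N C : ℕ)
    (hm : m = d / 12) (ha : a = d - 4 * m)
    (hN : N = ((a + 1) * (a + 2) / 2) * ((m + 1) * (m + 2) * (m + 3) / 6))
    (hC : C = (m + 1) * d * (d + d * m + e * m)) :
    C < N ∧
    (1 / 93312) * (d : ℚ) ^ 3 - (61 / 7776) * (d : ℚ) ^ 2 - (17 / 108) * (d : ℚ) - 28 / 27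
      ≤ (N : ℚ) - (C : ℚ) := by
  set r : ℕ := d % 12 with hr
  have hdm : d = 12 * m + r := by omega
  have hr11 : r ≤ 11 := by omega
  have hm62 : 62 ≤ m := by omega
  have ha' : a = 8 * m + r := by omega
  have h2 : 2 ∣ (a + 1) * (a + 2) := by
    rcases Nat.even_or_odd a with ⟨k, hk⟩ | ⟨k, hk⟩
    · exact ⟨(k + k + 1) * (k + 1), by subst hk; ring⟩
    · exact ⟨(k + 1) * (2 * k + 3), by subst hk; ring⟩
  have h6 : 6 ∣ (m + 1) * (m + 2) * (m + 3) := by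
    suffices h : (((m + 1) * (m + 2) * (m + 3) : ℕ) : ZMod 6) = 0 by
      exact (ZMod.natCast_eq_zero_iff _ 6).mp h
    push_cast
    have hz : ∀ x : ZMod 6, (x + 1) * (x + 2) * (x + 3) = 0 := by decide
    exact hz m
  have hN12 : (N : ℚ) * 12 = ((a:ℚ) + 1) * ((a:ℚ) + 2) * (((m:ℚ) + 1) * ((m:ℚ) + 2) * ((m:ℚ) + 3)) := by
    have hnat : N * 12 = ((a + 1) * (a + 2)) * ((m + 1) * (m + 2) * (m + 3)) := by
      rw [hN]
      obtain ⟨x, hx⟩ := h2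
      obtain ⟨y, hy⟩ := h6
      rw [hx, hy]
      rw [Nat.mul_div_cancel_left x (by norm_num : 0 < 2),
          Nat.mul_div_cancel_left y (by norm_num : 0 < 6)]
      ring
    have := congrArg (fun n : ℕ => (n : ℚ)) hnat
    push_cast at this
    linarith
  have hCq : (C : ℚ) = ((m:ℚ) + 1) * (d:ℚ) * ((d:ℚ) + (d:ℚ) * (m:ℚ) + (e:ℚ) * (m:ℚ)) := by
    rw [hC]; push_cast; ring
  have hdq : (d : ℚ) = 12 * (m:ℚ) + (r:ℚ) := by exact_mod_cast congrArg (Nat.cast : ℕ → ℚ) hdm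
  have haq : (a : ℚ) = 8 * (m:ℚ) + (r:ℚ) := by exact_mod_cast congrArg (Nat.cast : ℕ → ℚ) ha'
  have hmq : (62 : ℚ) ≤ (m:ℚ) := by exact_mod_cast hm62
  have hR0 : (0 : ℚ) ≤ (r:ℚ) := by positivity
  have hR : (r : ℚ) ≤ 11 := by exact_mod_cast hr11
  have hE0 : (0 : ℚ) ≤ (e:ℚ) := by positivity
  rw [hdq] at hCq he ⊢
  rw [haq] at hN12
  set M := (m:ℚ) with hM
  set R := (r:ℚ) with hRdef
  set E := (e:ℚ) with hEdef
  have hM0 : (0:ℚ) ≤ M := by linarith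
  have ht : (0:ℚ) ≤ M - 62 := by linarith
  -- bound the E-term
  have hEfact : 0 ≤ (M + 1) * (12 * M + R) * M * ((12 * M + R) ^ 2 / 648 - E) := by
    have h1 : (0:ℚ) ≤ M + 1 := by linarith
    have h2 : (0:ℚ) ≤ 12 * M + R := by linarith
    have h3 : (0:ℚ) ≤ (12 * M + R) ^ 2 / 648 - E := by linarith
    positivity
  -- grouped R^3 terms
  have hG1 : 0 ≤ R ^ 2 * (34346467 / 7776 - 562465 / 93312 * R) :=
    mul_nonneg (sq_nonneg R) (by linarith)
  have hG2 : 0 ≤ (M - 62) * (R ^ 2 * (648935 / 2592 - 125 / 648 * R)) :=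
    mul_nonneg ht (mul_nonneg (sq_nonneg R) (by linarith))
  have hG3 : 0 ≤ (M - 62) ^ 2 * (R ^ 2 * (83 / 18 - 1 / 648 * R)) :=
    mul_nonneg (sq_nonneg _) (mul_nonneg (sq_nonneg R) (by linarith))
  -- nonneg monomials
  have p1 : 0 ≤ (M - 62) * R := mul_nonneg ht hR0
  have p2 : 0 ≤ (M - 62) ^ 2 := sq_nonneg _
  have p3 : 0 ≤ (M - 62) ^ 2 * R := mul_nonneg p2 hR0
  have p4 : 0 ≤ (M - 62) ^ 3 := pow_nonneg ht 3
  have p5 : 0 ≤ (M - 62) ^ 3 * R := mul_nonneg p4 hR0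
  have p6 : 0 ≤ (M - 62) ^ 3 * R ^ 2 := mul_nonneg p4 (sq_nonneg R)
  have p7 : 0 ≤ (M - 62) ^ 4 := pow_nonneg ht 4
  have p8 : 0 ≤ (M - 62) ^ 4 * R := mul_nonneg p7 hR0
  have p9 : 0 ≤ (M - 62) ^ 5 := pow_nonneg ht 5
  have key : (1 / 93312) * (12 * M + R) ^ 3 - (61 / 7776) * (12 * M + R) ^ 2
      - (17 / 108) * (12 * M + R) - 28 / 27 ≤ (N : ℚ) - (C : ℚ) := by
    linarith [hN12, hCq, hEfact, hG1, hG2, hG3, p1, p2, p3, p4, p5, p6, p7, p8, p9, ht, hR0]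
  refine ⟨?_, key⟩
  have hd752 : (752 : ℚ) ≤ 12 * M + R := by
    have := congrArg (Nat.cast : ℕ → ℚ) hdm
    push_cast at this
    have : (752:ℚ) ≤ (d:ℚ) := by exact_mod_cast hd
    linarith [hdq ▸ this]
  have hpos : (0:ℚ) < (1 / 93312) * (12 * M + R) ^ 3 - (61 / 7776) * (12 * M + R) ^ 2
      - (17 / 108) * (12 * M + R) - 28 / 27 := statement16_posaux _ hd752
  have hlt : (C:ℚ) < (N:ℚ) := by linarith
  exact_mod_cast hlt
end
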